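/- Let G be a torsion-free abelian group and let (α₁,…,α_q) be a q-tuple of elements of G having property (P_{r,s}) with q ≥ r > s ≥ 1, r ≤ 2s, and q < 2s−1. Then there exist 2(q−r+2) distinct indices i₁,…,i_{q−r+2}, j₁,…,j_{q−r+2} in {1,…,q} such that α_{i₁} = … = α_{i_{q−r+2}} and α_{j₁} = … = α_{j_{q−r+2}}. -/

import Mathlib

/-- Property `(P_{r,s})` of a `q`-tuple `α` of elements of a (torsion-free) abelian group:
for any choice of `r` of the indices, every product of the `α`'s over `s` of the chosen
indices equals the product over a different `s`-element subset of the chosen indices. -/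
def HasPropP {G : Type*} [CommGroup G] {q : ℕ} (α : Fin q → G) (r s : ℕ) : Prop :=
  ∀ T : Finset (Fin q), T.card = r →
    ∀ I ⊆ T, I.card = s →
      ∃ J ⊆ T, J.card = s ∧ J ≠ I ∧ ∏ i ∈ I, α i = ∏ j ∈ J, α j

/-- A monoid is torsion-free if no element other than `1` has finite order
(the definition `Monoid.IsTorsionFree` of the older Mathlib, since removed). -/
def Monoid.IsTorsionFree (G : Type*) [Monoid G] : Prop :=
  ∀ g : G, g ≠ 1 → ¬IsOfFinOrder g

/-!
The values of `α` lie in a finitely generated torsion-free abelian group, which is free and hence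
embeds in the lexicographically ordered group `ℤⁿ`; so we may assume `G` linearly ordered and, after
sorting, `α₀ ≤ ⋯ ≤ α_{q-1}`. If an `s`-subset `I` of an `r`-set `T` lay strictly below (or above)
`T \ I`, every other `s`-subset of `T` would have a strictly larger (smaller) product, contradicting
`(P_{r,s})`. For `T` made of the first `s` and the last `r - s` positions this forces
`α_{s-1} = α_{q-r+s}`; for the first `r - s` and the last `s` positions, `α_{r-s-1} = α_{q-s}`.
The two index intervals have `q - r + 2` elements and are disjoint because `q < 2s - 1`.
-/

open Finset

def HasTwoDisjointConstantBlocks {ι X : Type*} (f : ι → X) (k : ℕ) : Prop :=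
  ∃ S T : Finset ι, Disjoint S T ∧ #S = k ∧ #T = k ∧
    (∀ i ∈ S, ∀ j ∈ S, f i = f j) ∧ (∀ i ∈ T, ∀ j ∈ T, f i = f j)

namespace HasTwoDisjointConstantBlocks

variable {ι κ X Y : Type*} {f : κ → X} {k : ℕ}

theorem comp (h : HasTwoDisjointConstantBlocks f k) (g : X → Y) :
    HasTwoDisjointConstantBlocks (g ∘ f) k := by
  obtain ⟨S, T, hST, hS, hT, hfS, hfT⟩ := h
  exact ⟨S, T, hST, hS, hT, fun i hi j hj => congrArg g (hfS i hi j hj),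
    fun i hi j hj => congrArg g (hfT i hi j hj)⟩

theorem of_comp_equiv (e : ι ≃ κ) (h : HasTwoDisjointConstantBlocks (f ∘ e) k) :
    HasTwoDisjointConstantBlocks f k := by
  obtain ⟨S, T, hST, hS, hT, hfS, hfT⟩ := h
  refine ⟨S.map e.toEmbedding, T.map e.toEmbedding, (disjoint_map _).2 hST, by simpa, by simpa,
    ?_, ?_⟩
  all_goals
    simp only [mem_map_equiv]
    intro i hi j hj
  · simpa using hfS _ hi _ hj
  · simpa using hfT _ hi _ hj

end HasTwoDisjointConstantBlocks

theorem Finset.prod_lt_prod_of_card_eq_of_forall_lt {ι M : Type*} [CommMonoid M] [LinearOrder M]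
    [IsOrderedCancelMonoid M] {A B : Finset ι} {f : ι → M} (hA : A.Nonempty) (hAB : #A = #B)
    (h : ∀ a ∈ A, ∀ b ∈ B, f a < f b) : ∏ a ∈ A, f a < ∏ b ∈ B, f b := by
  obtain ⟨a, ha, hmax⟩ := A.exists_max_image f hA
  obtain ⟨b, hb, hmin⟩ := B.exists_min_image f (card_pos.1 (hAB ▸ card_pos.2 hA))
  calc ∏ a ∈ A, f a ≤ f a ^ #A := prod_le_pow_card A f (f a) hmax
    _ < f b ^ #A := pow_lt_pow_left' (card_pos.2 hA).ne' (h a ha b hb)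
    _ ≤ ∏ b ∈ B, f b := hAB ▸ pow_card_le_prod B f (f b) hmin

namespace HasPropP

variable {G H : Type*} [CommGroup G] [CommGroup H] {q r s : ℕ} {α : Fin q → G}

theorem comp_perm (hα : HasPropP α r s) (σ : Equiv.Perm (Fin q)) : HasPropP (α ∘ σ) r s := by
  intro T hT I hIT hI
  obtain ⟨J, hJT, hJ, hJI, hprod⟩ := hα (T.map σ.toEmbedding) (by simpa)
    (I.map σ.toEmbedding) (map_subset_map.2 hIT) (by simpa)
  obtain ⟨J, rfl⟩ : ∃ J' : Finset (Fin q), J'.map σ.toEmbedding = J :=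
    ⟨J.map σ.symm.toEmbedding, by simp [map_map]⟩
  refine ⟨J, map_subset_map.1 hJT, by simpa using hJ, fun h => hJI (h ▸ rfl), ?_⟩
  simpa [prod_map] using hprod

theorem of_comp {f : G →* H} (hf : Function.Injective f) (hα : HasPropP (f ∘ α) r s) :
    HasPropP α r s := by
  intro T hT I hIT hI
  obtain ⟨J, hJT, hJ, hJI, hprod⟩ := hα T hT I hIT hI
  refine ⟨J, hJT, hJ, hJI, hf ?_⟩
  simpa only [map_prod, Function.comp_apply] using hprod

end HasPropP

section LinearOrder

variable {M : Type*} [CommGroup M] [LinearOrder M] [IsOrderedMonoid M] {q r s : ℕ}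
  {α : Fin q → M}

theorem HasPropP.exists_apply_sdiff_le (hα : HasPropP α r s) {T I : Finset (Fin q)} (hT : #T = r)
    (hIT : I ⊆ T) (hI : #I = s) : ∃ i ∈ I, ∃ t ∈ T \ I, α t ≤ α i := by
  obtain ⟨J, hJT, hJ, hJI, hprod⟩ := hα T hT I hIT hI
  by_contra! hsep
  have hcard : #I = #J := hI.trans hJ.symm
  have hlt : ∏ i ∈ I \ J, α i < ∏ j ∈ J \ I, α j :=
    prod_lt_prod_of_card_eq_of_forall_lt
      (sdiff_nonempty.2 fun h => hJI (eq_of_subset_of_card_le h hcard.ge).symm)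
      (card_sdiff_comm hcard) fun i hi j hj =>
        hsep i (mem_sdiff.1 hi).1 j (mem_sdiff.2 ⟨hJT (mem_sdiff.1 hj).1, (mem_sdiff.1 hj).2⟩)
  exact hlt.ne (prod_sdiff_eq_prod_sdiff_iff.2 hprod)

theorem HasPropP.exists_le_apply_sdiff (hα : HasPropP α r s) {T I : Finset (Fin q)} (hT : #T = r)
    (hIT : I ⊆ T) (hI : #I = s) : ∃ i ∈ I, ∃ t ∈ T \ I, α i ≤ α t :=
  -- applied in `Mᵒᵈ`, whose `IsOrderedMonoid` instance has to be passed explicitly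
  @HasPropP.exists_apply_sdiff_le Mᵒᵈ _ _ OrderDual.isOrderedMonoid _ _ _ _ hα _ _ hT hIT hI

theorem Monotone.apply_eq_of_hasPropP (hmono : Monotone α) (hα : HasPropP α r s) {x y : Fin q}
    (hxy : x < y) (hr : (x + 1) + (q - y) = r) (hs : x + 1 = s ∨ q - y = s) : α x = α y := by
  have hdisj : Disjoint (Iic x) (Ici y) :=
    disjoint_left.2 fun i hx hy => (mem_Iic.1 hx).not_gt ((mem_Ici.1 hy).trans_lt' hxy)
  have hT : #(Iic x ∪ Ici y) = r := by
    rw [card_union_of_disjoint hdisj, Fin.card_Iic, Fin.card_Ici, hr]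
  refine (hmono hxy.le).antisymm ?_
  rcases hs with hs | hs
  · obtain ⟨i, hi, t, ht, hti⟩ :=
      hα.exists_apply_sdiff_le hT subset_union_left (by rw [Fin.card_Iic, hs])
    rw [union_sdiff_cancel_left hdisj] at ht
    exact (hmono (mem_Ici.1 ht)).trans (hti.trans (hmono (mem_Iic.1 hi)))
  · obtain ⟨i, hi, t, ht, hit⟩ :=
      hα.exists_le_apply_sdiff hT subset_union_right (by rw [Fin.card_Ici, hs])
    rw [union_sdiff_cancel_right hdisj] at ht
    exact (hmono (mem_Ici.1 hi)).trans (hit.trans (hmono (mem_Iic.1 ht)))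

theorem Monotone.hasTwoDisjointConstantBlocks_of_hasPropP (hsr : s < r) (hrq : r ≤ q)
    (hq : q < 2 * s - 1) (hmono : Monotone α) (hα : HasPropP α r s) :
    HasTwoDisjointConstantBlocks α (q - r + 2) := by
  have constant_on_Icc {x y : Fin q} (hxy : α x = α y) :
      ∀ i ∈ Icc x y, ∀ j ∈ Icc x y, α i = α j := by
    have h k (hk : k ∈ Icc x y) : α k = α x :=
      (hxy ▸ hmono (mem_Icc.1 hk).2).antisymm (hmono (mem_Icc.1 hk).1)
    exact fun i hi j hj => (h i hi).trans (h j hj).symm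
  refine ⟨Icc ⟨r - s - 1, by omega⟩ ⟨q - s, by omega⟩, Icc ⟨s - 1, by omega⟩ ⟨q - r + s, by omega⟩,
    ?_, ?_, ?_, constant_on_Icc ?_, constant_on_Icc ?_⟩
  · refine disjoint_left.2 fun i hi hi' => ?_
    simp only [mem_Icc, Fin.le_def] at hi hi'
    omega
  · simp only [Fin.card_Icc]; omega
  · simp only [Fin.card_Icc]; omega
  · exact hmono.apply_eq_of_hasPropP hα (Fin.mk_lt_mk.2 (by omega)) (by dsimp only; omega)
      (by dsimp only; omega)
  · exact hmono.apply_eq_of_hasPropP hα (Fin.mk_lt_mk.2 (by omega)) (by dsimp only; omega)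
      (by dsimp only; omega)

end LinearOrder

theorem HasPropP.hasTwoDisjointConstantBlocks {M : Type*} [CommGroup M] [LinearOrder M]
    [IsOrderedMonoid M] {q r s : ℕ} {α : Fin q → M} (hsr : s < r) (hrq : r ≤ q)
    (hq : q < 2 * s - 1) (hα : HasPropP α r s) : HasTwoDisjointConstantBlocks α (q - r + 2) :=
  .of_comp_equiv (Tuple.sort α) <|
    (Tuple.monotone_sort α).hasTwoDisjointConstantBlocks_of_hasPropP hsr hrq hq (hα.comp_perm _)

theorem exists_injective_monoidHom_lex {G ι : Type*} [CommGroup G] [IsMulTorsionFree G] [Finite ι]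
    (α : ι → G) :
    ∃ n, ∃ f : Multiplicative (Lex (Fin n → ℤ)) →* G, Function.Injective f ∧
      ∀ i, α i ∈ Set.range f := by
  let N := Submodule.span ℤ (Set.range (Additive.ofMul ∘ α))
  have : Module.Finite ℤ N := Module.Finite.span_of_finite ℤ (Set.finite_range _)
  let e : Lex (Fin _ → ℤ) ≃ₗ[ℤ] N :=
    (ofLexLinearEquiv ℤ (Fin _ → ℤ)).trans (Module.finBasis ℤ N).equivFun.symm
  let g : Lex (Fin _ → ℤ) →+ Additive G := (N.subtype ∘ₗ e.toLinearMap).toAddMonoidHom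
  refine ⟨_, AddMonoidHom.toMultiplicativeLeft g, ?_, fun i => ?_⟩
  · exact Additive.toMul.injective.comp
      ((N.injective_subtype.comp e.injective).comp Multiplicative.toAdd.injective)
  · let y : N := ⟨Additive.ofMul (α i), Submodule.subset_span ⟨i, rfl⟩⟩
    exact ⟨Multiplicative.ofAdd (e.symm y), by simp [g, y]⟩

theorem stmt2_general {G : Type*} [CommGroup G] (hG : Monoid.IsTorsionFree G)
    {q r s : ℕ} (hsr : s < r) (hrq : r ≤ q)
    (hq2s : q < 2 * s - 1)
    (α : Fin q → G) (hα : HasPropP α r s) :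
    ∃ S T : Finset (Fin q), Disjoint S T ∧ S.card = q - r + 2 ∧ T.card = q - r + 2 ∧
      (∀ i ∈ S, ∀ j ∈ S, α i = α j) ∧ (∀ i ∈ T, ∀ j ∈ T, α i = α j) := by
  have : IsMulTorsionFree G := isMulTorsionFree_iff_not_isOfFinOrder.2 hG
  obtain ⟨n, f, hf, hαf⟩ := exists_injective_monoidHom_lex α
  choose β hβ using hαf
  obtain rfl : f ∘ β = α := funext hβ
  exact ((HasPropP.of_comp hf hα).hasTwoDisjointConstantBlocks hsr hrq hq2s).comp f

theorem stmt2 {G : Type*} [CommGroup G] (hG : Monoid.IsTorsionFree G)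
    {q r s : ℕ} (hs : 1 ≤ s) (hsr : s < r) (hrq : r ≤ q)
    (hr2s : r ≤ 2 * s) (hq2s : q < 2 * s - 1)
    (α : Fin q → G) (hα : HasPropP α r s) :
    ∃ S T : Finset (Fin q), Disjoint S T ∧ S.card = q - r + 2 ∧ T.card = q - r + 2 ∧
      (∀ i ∈ S, ∀ j ∈ S, α i = α j) ∧ (∀ i ∈ T, ∀ j ∈ T, α i = α j) :=
  stmt2_general hG hsr hrq hq2s α hα
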